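/- arXiv:0902.4741 — 3 statements merged into one kernel-verified Lean document; each statement's English description precedes it below -/
import Mathlib

section
/- Let a: [0,∞) → ℝ be locally integrable, y₀ ≥ 0, and let y be any nonnegative global solution of the Cauchy problem y' + 2a√y = 0, y(0) = y₀. Define a*(s) := a(s) if y(s) > 0 and a*(s) := 0 otherwise. Then √(y(t)) = √y₀ − ∫₀ᵗ a*(s) ds for every t ≥ 0. -/
/-!
For `c > 0` the map `u ↦ √(u + c)` is Lipschitz on `[0, ∞)`, so its composition with the
absolutely continuous solution `y` is absolutely continuous, and the chain rule at the almost
every point where `y' = -2 a √y` gives `√(y t + c) = √(y₀ + c) - ∫₀ᵗ a √y / √(y + c)`.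
As `c → 0⁺` the integrand is dominated by `|a|` and tends to `a` where `y > 0` and to `0`
where `y = 0`, so dominated convergence yields the identity for `√y`.
-/

open MeasureTheory Set Filter

/-- `a` is locally integrable on `[0,∞)`. -/
def LocIntOn (a : ℝ → ℝ) : Prop :=
  ∀ t : ℝ, 0 ≤ t → MeasureTheory.IntegrableOn a (Set.Icc 0 t) MeasureTheory.volume

/-- `y` is a nonnegative global solution of the Cauchy problem
`y' + 2 a √y = 0`, `y 0 = y₀`, in integral form. -/
def IsSol (a : ℝ → ℝ) (y₀ : ℝ) (y : ℝ → ℝ) : Prop :=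
  ContinuousOn y (Set.Ici 0) ∧ (∀ t : ℝ, 0 ≤ t → 0 ≤ y t) ∧
    ∀ t : ℝ, 0 ≤ t → y t = y₀ - 2 * ∫ s in (0:ℝ)..t, a s * Real.sqrt (y s)

/-- Membership in the set `S(a, y₀)`. -/
def MemS (a : ℝ → ℝ) (y₀ : ℝ) (w : ℝ → ℝ) : Prop :=
  (∀ t : ℝ, 0 ≤ t → 0 ≤ w t) ∧
    ∃ g : ℝ → ℝ,
      (∀ t : ℝ, 0 ≤ t → MeasureTheory.IntegrableOn g (Set.Icc 0 t) MeasureTheory.volume) ∧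
      (∀ t : ℝ, 0 ≤ t → w t = Real.sqrt y₀ + ∫ s in (0:ℝ)..t, g s) ∧
      (∀ᵐ s ∂(MeasureTheory.volume : MeasureTheory.Measure ℝ), 0 ≤ s → 0 < w s → g s = -a s)

/-- `y` is the maximal nonnegative global solution. -/
def IsMaxSol (a : ℝ → ℝ) (y₀ : ℝ) (y : ℝ → ℝ) : Prop :=
  IsSol a y₀ y ∧ ∀ z : ℝ → ℝ, IsSol a y₀ z → ∀ t : ℝ, 0 ≤ t → z t ≤ y t

open Topology NNReal Function

theorem AbsolutelyContinuousOnInterval.comp_lipschitzOnWith {X Z : Type*} [PseudoMetricSpace X]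
    [PseudoMetricSpace Z] {f : ℝ → X} {φ : X → Z} {K : ℝ≥0} {s : Set X} {a b : ℝ}
    (hφ : LipschitzOnWith K φ s) (hf : AbsolutelyContinuousOnInterval f a b)
    (hfs : MapsTo f (uIcc a b) s) :
    AbsolutelyContinuousOnInterval (φ ∘ f) a b := by
  unfold AbsolutelyContinuousOnInterval at hf ⊢
  refine squeeze_zero' (Eventually.of_forall fun _ => Finset.sum_nonneg fun _ _ => dist_nonneg)
    ?_ (by simpa using hf.const_mul (K : ℝ))
  rw [eventually_inf_principal]
  filter_upwards with ⟨n, I⟩ hnI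
  rw [Finset.mul_sum]
  gcongr with i hi
  exact hφ.dist_le_mul _ (hfs (hnI.1 i hi).1) _ (hfs (hnI.1 i hi).2)

theorem AbsolutelyContinuousOnInterval.integral_deriv_comp_mul_deriv {f f' φ φ' : ℝ → ℝ}
    {K : ℝ≥0} {s : Set ℝ} {a b : ℝ} (hf : AbsolutelyContinuousOnInterval f a b)
    (hf' : ∀ᵐ x, x ∈ uIcc a b → HasDerivAt f (f' x) x) (hφ : LipschitzOnWith K φ s)
    (hφ' : ∀ x ∈ s, HasDerivAt φ (φ' x) x) (hfs : MapsTo f (uIcc a b) s) :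
    ∫ x in a..b, φ' (f x) * f' x = φ (f b) - φ (f a) := by
  rw [← comp_apply (f := φ), ← comp_apply (f := φ) (x := a),
    ← (hf.comp_lipschitzOnWith hφ hfs).integral_deriv_eq_sub]
  refine intervalIntegral.integral_congr_ae ?_
  filter_upwards [hf'] with x hx hxab
  have hx' := uIoc_subset_uIcc hxab
  exact ((hφ' _ (hfs hx')).comp x (hx hx')).deriv.symm

lemma Real.hasDerivAt_sqrt_add {c x : ℝ} (h : 0 < x + c) :
    HasDerivAt (fun u => √(u + c)) (1 / (2 * √(x + c))) x :=
  ((hasDerivAt_id x).add_const c).sqrt h.ne'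

lemma Real.lipschitzOnWith_sqrt_add {c : ℝ} (hc : 0 < c) :
    LipschitzOnWith (1 / (2 * √c)).toNNReal (fun u => √(u + c)) (Ici 0) := by
  refine (convex_Ici 0).lipschitzOnWith_of_nnnorm_hasDerivWithin_le
    (fun x hx => (Real.hasDerivAt_sqrt_add (by linarith [mem_Ici.1 hx])).hasDerivWithinAt)
    fun x hx => ?_
  rw [← NNReal.coe_le_coe, coe_nnnorm, Real.coe_toNNReal _ (by positivity),
    Real.norm_of_nonneg (by positivity)]
  gcongr
  linarith [mem_Ici.1 hx]

lemma Real.tendsto_sqrt_add_nhdsGT_zero (x : ℝ) :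
    Tendsto (fun c => √(x + c)) (𝓝[>] 0) (𝓝 √x) := by
  have : Tendsto (fun c => √(x + c)) (𝓝 0) (𝓝 √(x + 0)) :=
    (Real.continuous_sqrt.comp (continuous_const.add continuous_id)).tendsto 0
  simpa using this.mono_left nhdsWithin_le_nhds

lemma tendsto_intervalIntegral_mul_sqrt_div_sqrt_add {a y : ℝ → ℝ} {u v : ℝ}
    (ha : IntervalIntegrable a volume u v)
    (hy : AEStronglyMeasurable y (volume.restrict (uIoc u v))) :
    Tendsto (fun c => ∫ s in u..v, a s * √(y s) / √(y s + c)) (𝓝[>] 0)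
      (𝓝 (∫ s in u..v, if 0 < y s then a s else 0)) := by
  refine intervalIntegral.tendsto_integral_filter_of_dominated_convergence (fun s => |a s|)
    (Eventually.of_forall fun c => ?_) ?_ ha.abs (Eventually.of_forall fun s _ => ?_)
  · have hsqrt := Real.continuous_sqrt.comp_aestronglyMeasurable hy
    have hsqrt' := Real.continuous_sqrt.comp_aestronglyMeasurable (hy.add_const c)
    exact (ha.def'.aestronglyMeasurable.mul hsqrt).div₀ hsqrt'
  · filter_upwards [self_mem_nhdsWithin] with c (hc : 0 < c)
    refine Eventually.of_forall fun s _ => ?_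
    rw [Real.norm_eq_abs, mul_div_assoc, abs_mul,
      abs_of_nonneg (div_nonneg (Real.sqrt_nonneg _) (Real.sqrt_nonneg _))]
    refine mul_le_of_le_one_right (abs_nonneg _) (div_le_one_of_le₀ ?_ (Real.sqrt_nonneg _))
    exact Real.sqrt_le_sqrt (by linarith)
  · by_cases hys : 0 < y s
    · have hne : √(y s) ≠ 0 := (Real.sqrt_pos.2 hys).ne'
      have h : Tendsto (fun c => a s * (√(y s) / √(y s + c))) (𝓝[>] 0)
          (𝓝 (a s * (√(y s) / √(y s)))) :=
        tendsto_const_nhds.mul (tendsto_const_nhds.div (Real.tendsto_sqrt_add_nhdsGT_zero (y s)) hne)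
      simpa only [if_pos hys, mul_div_assoc, div_self hne, mul_one] using h
    · simp [if_neg hys, Real.sqrt_eq_zero'.2 (not_lt.1 hys)]

lemma IsSol.sqrt_add_eq {a y : ℝ → ℝ} {y₀ c t : ℝ} (ha : LocIntOn a) (hy : IsSol a y₀ y)
    (hc : 0 < c) (ht : 0 ≤ t) :
    √(y t + c) = √(y₀ + c) - ∫ s in (0:ℝ)..t, a s * √(y s) / √(y s + c) := by
  obtain ⟨hy_cont, hy_nonneg, hy_eq⟩ := hy
  have h0t : uIcc 0 t ⊆ Ici 0 := fun s hs => (uIcc_of_le ht ▸ hs).1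
  have hg : IntervalIntegrable (fun s => a s * √(y s)) volume 0 t :=
    ((intervalIntegrable_iff_integrableOn_Icc_of_le ht).2 (ha t ht)).mul_continuousOn
      (Real.continuous_sqrt.comp_continuousOn (hy_cont.mono h0t))
  set f : ℝ → ℝ := fun r => y₀ - 2 * ∫ s in (0:ℝ)..r, a s * √(y s)
  have hfy : EqOn f y (uIcc 0 t) := fun r hr => (hy_eq r (h0t hr)).symm
  have hf : AbsolutelyContinuousOnInterval f 0 t :=
    (LipschitzWith.const y₀).lipschitzOnWith.absolutelyContinuousOnInterval.fun_sub
      ((hg.absolutelyContinuousOnInterval_intervalIntegral (by simp)).const_mul 2)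
  have hf' : ∀ᵐ x, x ∈ uIcc 0 t → HasDerivAt f (-(2 * (a x * √(y x)))) x := by
    filter_upwards [hg.ae_hasDerivAt_integral] with x hx hxt
    simpa using ((hx hxt 0 (by simp)).const_mul 2).const_sub y₀
  have hchain := hf.integral_deriv_comp_mul_deriv hf' (Real.lipschitzOnWith_sqrt_add hc)
    (fun x hx => Real.hasDerivAt_sqrt_add (by linarith [mem_Ici.1 hx]))
    (fun x hx => hfy hx ▸ hy_nonneg x (h0t hx))
  have hf0 : f 0 = y₀ := by simp [f]
  have hintegrand : ∫ x in (0:ℝ)..t, 1 / (2 * √(f x + c)) * -(2 * (a x * √(y x)))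
      = -∫ x in (0:ℝ)..t, a x * √(y x) / √(y x + c) := by
    rw [← intervalIntegral.integral_neg]
    refine intervalIntegral.integral_congr fun x hx => ?_
    simp only [hfy hx]
    ring
  rw [hintegrand, hf0, hfy right_mem_uIcc] at hchain
  linarith

theorem stmt2_general (a : ℝ → ℝ) (y₀ : ℝ) (ha : LocIntOn a)
    (y : ℝ → ℝ) (hy : IsSol a y₀ y) :
    ∀ t : ℝ, 0 ≤ t →
      Real.sqrt (y t) = Real.sqrt y₀ - ∫ s in (0:ℝ)..t, (if 0 < y s then a s else 0) := by
  intro t ht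
  have hmeas : AEStronglyMeasurable y (volume.restrict (uIoc 0 t)) :=
    (hy.1.mono (fun s hs => (uIoc_of_le ht ▸ hs).1.le)).aestronglyMeasurable measurableSet_uIoc
  refine tendsto_nhds_unique (Real.tendsto_sqrt_add_nhdsGT_zero (y t)) ?_
  refine ((Real.tendsto_sqrt_add_nhdsGT_zero y₀).sub (tendsto_intervalIntegral_mul_sqrt_div_sqrt_add
    ((intervalIntegrable_iff_integrableOn_Icc_of_le ht).2 (ha t ht)) hmeas)).congr' ?_
  filter_upwards [self_mem_nhdsWithin] with c (hc : 0 < c)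
  exact (hy.sqrt_add_eq ha hc ht).symm

theorem stmt2 (a : ℝ → ℝ) (y₀ : ℝ) (ha : LocIntOn a) (hy₀ : 0 ≤ y₀)
    (y : ℝ → ℝ) (hy : IsSol a y₀ y) :
    ∀ t : ℝ, 0 ≤ t →
      Real.sqrt (y t) = Real.sqrt y₀ - ∫ s in (0:ℝ)..t, (if 0 < y s then a s else 0) :=
  stmt2_general a y₀ ha y hy
end

section
/- For i = 1, 2, let aᵢ: [0,∞) → ℝ be locally integrable, let y₀ ≥ 0, and let yᵢ be the maximal solution of the Cauchy problem y' + 2aᵢ√y = 0, y(0) = y₀. Then for every t ≥ 0, sup_{s ∈ [0,t]} |√(y₁(s)) − √(y₂(s))| ≤ ∫₀ᵗ |a₁(s) − a₂(s)| ds. -/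
open MeasureTheory Set Filter

/-!
Where a solution `y` is positive, `√y` is absolutely continuous with derivative `-a`. Fix `s` and
let `τ` be the last zero of `y₁` before `s`, or `τ = 0`; then `√(y₁ s) = √(y₁ τ) - ∫_τ^s a₁`.
For the `a₂`-problem, the function equal to `(√y₀ - ∫₀ᵗ a₂)⁺` up to time `τ` and to
`(w τ - ∫_τᵗ a₂)⁺` afterwards is the square root of a solution, hence lies below `√y₂`, and its
starting level at `τ` is at least `√(y₁ τ)`. Comparing on `[τ, s]` gives
`√(y₁ s) - √(y₂ s) ≤ ∫_τ^s (a₂ - a₁)`. The chain rules are instances of the fundamental theorem of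
calculus for absolutely continuous functions.
-/

open Topology

theorem LipschitzOnWith.comp_absolutelyContinuousOnInterval {X Y : Type*} [PseudoMetricSpace X]
    [PseudoMetricSpace Y] {g : X → Y} {f : ℝ → X} {K : NNReal} {s : Set X} {a b : ℝ}
    (hg : LipschitzOnWith K g s) (hf : AbsolutelyContinuousOnInterval f a b)
    (hfs : MapsTo f (uIcc a b) s) : AbsolutelyContinuousOnInterval (g ∘ f) a b := by
  unfold AbsolutelyContinuousOnInterval at hf ⊢
  refine squeeze_zero' (Eventually.of_forall fun _ => Finset.sum_nonneg fun _ _ => dist_nonneg)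
    ?_ (by simpa using hf.const_mul (K : ℝ))
  filter_upwards [mem_inf_of_right (mem_principal_self _)] with E hE
  rw [Finset.mul_sum]
  refine Finset.sum_le_sum fun i hi => hg.dist_le_mul _ (hfs (hE.1 i hi).1) _ (hfs (hE.1 i hi).2)

theorem AbsolutelyContinuousOnInterval.integral_deriv_comp_mul_deriv_s5 {H φ : ℝ → ℝ} {a b : ℝ}
    (hφ : AbsolutelyContinuousOnInterval φ a b) (hH : ∀ x ∈ uIcc a b, ContDiffAt ℝ 1 H (φ x)) :
    ∫ x in a..b, deriv H (φ x) * deriv φ x = H (φ b) - H (φ a) := by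
  have hH_lip : LocallyLipschitzOn (φ '' uIcc a b) H := by
    rintro _ ⟨x, hx, rfl⟩
    obtain ⟨K, t, ht, hK⟩ := (hH x hx).exists_lipschitzOnWith
    exact ⟨K, t, mem_nhdsWithin_of_mem_nhds ht, hK⟩
  obtain ⟨K, hK⟩ := hH_lip.exists_lipschitzOnWith_of_compact
    (isCompact_uIcc.image_of_continuousOn hφ.continuousOn)
  refine Eq.trans (intervalIntegral.integral_congr_ae ?_)
    (hK.comp_absolutelyContinuousOnInterval hφ (mapsTo_image _ _)).integral_deriv_eq_sub
  filter_upwards [hφ.ae_differentiableAt] with x hφx hx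
  have hx' := uIoc_subset_uIcc hx
  exact ((((hH x hx').differentiableAt one_ne_zero).hasDerivAt.comp x
    (hφx hx').hasDerivAt).deriv).symm

theorem sub_eq_integral_deriv_comp_mul {H φ f : ℝ → ℝ} {a b : ℝ}
    (hf : IntervalIntegrable f volume a b) (hφ : ∀ x ∈ uIcc a b, φ x = φ a + ∫ t in a..x, f t)
    (hH : ∀ x ∈ uIcc a b, ContDiffAt ℝ 1 H (φ x)) :
    H (φ b) - H (φ a) = ∫ x in a..b, deriv H (φ x) * f x := by
  set Φ : ℝ → ℝ := fun x => φ a + ∫ t in a..x, f t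
  have hΦ : AbsolutelyContinuousOnInterval Φ a b :=
    (LipschitzWith.const (φ a)).lipschitzOnWith.absolutelyContinuousOnInterval.add
      (hf.absolutelyContinuousOnInterval_intervalIntegral left_mem_uIcc)
  have key := hΦ.integral_deriv_comp_mul_deriv_s5 fun x hx => hφ x hx ▸ hH x hx
  rw [show Φ b = φ b from (hφ b right_mem_uIcc).symm, show Φ a = φ a by simp [Φ]] at key
  rw [← key]
  refine intervalIntegral.integral_congr_ae ?_
  filter_upwards [hf.ae_hasDerivAt_integral] with x hΦx hx
  have hx' := uIoc_subset_uIcc hx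
  rw [show Φ x = φ x from (hφ x hx').symm,
    show deriv Φ x = f x from ((hΦx hx' a left_mem_uIcc).const_add (φ a)).deriv]

theorem hasDerivAt_max_zero_sq (x : ℝ) :
    HasDerivAt (fun y : ℝ => max y 0 ^ 2) (2 * max x 0) x := by
  refine hasDerivAt_of_hasDerivAt_of_ne' (f := fun y : ℝ => max y 0 ^ 2)
    (g := fun y => 2 * max y 0) (x := 0) (fun y hy => ?_) (by fun_prop) (by fun_prop) x
  rcases hy.lt_or_gt with hy | hy
  · refine ((hasDerivAt_const y (0 : ℝ)).congr_of_eventuallyEq ?_).congr_deriv (by simp [hy.le])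
    filter_upwards [Iio_mem_nhds hy] with z hz
    simp [(mem_Iio.1 hz).le]
  · refine ((hasDerivAt_pow 2 y).congr_of_eventuallyEq ?_).congr_deriv (by simp [hy.le])
    filter_upwards [Ioi_mem_nhds hy] with z hz
    simp [(mem_Ioi.1 hz).le]

theorem contDiff_max_zero_sq : ContDiff ℝ 1 (fun y : ℝ => max y 0 ^ 2) := by
  refine contDiff_one_iff_deriv.2 ⟨fun x => (hasDerivAt_max_zero_sq x).differentiableAt, ?_⟩
  rw [funext fun x => (hasDerivAt_max_zero_sq x).deriv]
  fun_prop

theorem sq_eq_sub_integral_of_eq_max_sub_integral {a W : ℝ → ℝ} {c t₀ t : ℝ}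
    (ha : IntervalIntegrable a volume t₀ t)
    (hW : ∀ r ∈ uIcc t₀ t, W r = max (c - ∫ u in t₀..r, a u) 0) :
    W t ^ 2 = W t₀ ^ 2 - 2 * ∫ r in t₀..t, a r * W r := by
  have hφ : ∀ r ∈ uIcc t₀ t,
      c - ∫ u in t₀..r, a u = (c - ∫ u in t₀..t₀, a u) + ∫ u in t₀..r, -a u := by
    intro r _
    simp [intervalIntegral.integral_neg, sub_eq_add_neg]
  have key := sub_eq_integral_deriv_comp_mul (H := fun y => max y 0 ^ 2) (f := fun u => -a u)
    ha.neg hφ fun r _ => contDiff_max_zero_sq.contDiffAt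
  have hint : ∫ r in t₀..t, deriv (fun y => max y 0 ^ 2) (c - ∫ u in t₀..r, a u) * -a r =
      -2 * ∫ r in t₀..t, a r * W r := by
    rw [← intervalIntegral.integral_const_mul]
    refine intervalIntegral.integral_congr fun r hr => ?_
    simp only [(hasDerivAt_max_zero_sq _).deriv, hW r hr]
    ring
  rw [hint, ← hW t right_mem_uIcc, ← hW t₀ left_mem_uIcc] at key
  linarith

theorem ContinuousOn.exists_forall_Ioc_ne {X : Type*} [TopologicalSpace X] [T1Space X]
    {f : ℝ → X} {a b : ℝ} {c : X} (hf : ContinuousOn f (Icc a b)) (hab : a ≤ b) :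
    ∃ τ ∈ Icc a b, (τ = a ∨ f τ = c) ∧ ∀ σ ∈ Ioc τ b, f σ ≠ c := by
  set Z := {a} ∪ (Icc a b ∩ f ⁻¹' {c})
  have hZ : IsCompact Z :=
    isCompact_Icc.of_isClosed_subset
      (isClosed_singleton.union (hf.preimage_isClosed_of_isClosed isClosed_Icc isClosed_singleton))
      (union_subset (singleton_subset_iff.2 (left_mem_Icc.2 hab)) inter_subset_left)
  obtain ⟨τ, hτZ, hτ_max⟩ := hZ.exists_isGreatest (singleton_nonempty a).inl
  have hτ : τ ∈ Icc a b := by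
    rcases hτZ with rfl | hτZ
    exacts [left_mem_Icc.2 hab, hτZ.1]
  refine ⟨τ, hτ, hτZ.imp id (·.2), fun σ hσ hfσ => ?_⟩
  exact hσ.1.not_ge (hτ_max (Or.inr ⟨⟨hτ.1.trans hσ.1.le, hσ.2⟩, hfσ⟩))

namespace LocIntOn

variable {a : ℝ → ℝ}

theorem intervalIntegrable (ha : LocIntOn a) {s t : ℝ} (hs : 0 ≤ s) (ht : 0 ≤ t) :
    IntervalIntegrable a volume s t :=
  ((ha (max s t) (le_max_of_le_left hs)).mono_set
    (uIcc_subset_Icc ⟨hs, le_max_left _ _⟩ ⟨ht, le_max_right _ _⟩)).intervalIntegrable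

theorem mul_continuousOn {g : ℝ → ℝ} (ha : LocIntOn a) (hg : ContinuousOn g (Ici 0)) :
    LocIntOn fun s => a s * g s :=
  fun t ht => (ha t ht).mul_continuousOn (hg.mono Icc_subset_Ici_self) isCompact_Icc

theorem continuousOn_primitive (ha : LocIntOn a) :
    ContinuousOn (fun t => ∫ s in (0:ℝ)..t, a s) (Ici 0) := by
  intro t ht
  have hI : uIcc 0 (t + 1) ∈ 𝓝[Ici 0] t := by
    rw [uIcc_of_le (by linarith [mem_Ici.1 ht]), ← Ici_inter_Iic]
    exact inter_mem self_mem_nhdsWithin (mem_nhdsWithin_of_mem_nhds (Iic_mem_nhds (by linarith)))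
  exact ((intervalIntegral.continuousOn_primitive_interval'
    (ha.intervalIntegrable le_rfl (by linarith [mem_Ici.1 ht])) left_mem_uIcc) t
    (mem_of_mem_nhdsWithin ht hI)).mono_of_mem_nhdsWithin hI

end LocIntOn

namespace IsSol

variable {a y : ℝ → ℝ} {y₀ : ℝ}

theorem eq_add_integral (ha : LocIntOn a) (hy : IsSol a y₀ y) {τ t : ℝ} (hτ : 0 ≤ τ)
    (ht : 0 ≤ t) : y t = y τ + ∫ u in τ..t, -2 * (a u * √(y u)) := by
  have hi : LocIntOn fun u => a u * √(y u) :=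
    ha.mul_continuousOn (Real.continuous_sqrt.comp_continuousOn hy.1)
  rw [hy.2.2 t ht, hy.2.2 τ hτ, intervalIntegral.integral_const_mul,
    ← intervalIntegral.integral_interval_sub_left (hi.intervalIntegrable le_rfl ht)
      (hi.intervalIntegrable le_rfl hτ)]
  ring

/-- `√` is smooth only away from zero: use the chain rule on `[τ', s]` for `τ' > τ`, then let
`τ'` tend to `τ`. -/
theorem sqrt_eq_sub_integral (ha : LocIntOn a) (hy : IsSol a y₀ y) {τ s : ℝ} (hτ : 0 ≤ τ)
    (hτs : τ ≤ s) (hpos : ∀ σ ∈ Ioc τ s, 0 < y σ) :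
    √(y s) = √(y τ) - ∫ σ in τ..s, a σ := by
  rcases hτs.eq_or_lt with rfl | hτs
  · simp
  have hs : 0 ≤ s := hτ.trans hτs.le
  have hIcc : Icc τ s ⊆ Ici 0 := fun x hx => hτ.trans hx.1
  have hstep : EqOn (fun τ' => √(y τ') - ∫ σ in τ'..s, a σ) (fun _ => √(y s)) (Ioc τ s) := by
    intro τ' hτ'
    have hτ'0 : 0 ≤ τ' := hτ.trans hτ'.1.le
    have hmem : ∀ x ∈ uIcc τ' s, x ∈ Ioc τ s := fun x hx => by
      rw [uIcc_of_le hτ'.2] at hx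
      exact ⟨hτ'.1.trans_le hx.1, hx.2⟩
    have hi : IntervalIntegrable (fun u => -2 * (a u * √(y u))) volume τ' s :=
      ((ha.mul_continuousOn (Real.continuous_sqrt.comp_continuousOn hy.1)).intervalIntegrable
        hτ'0 hs).const_mul (-2)
    have hchain := sub_eq_integral_deriv_comp_mul (H := (√·)) hi
      (fun x hx => hy.eq_add_integral ha hτ'0 (hτ.trans (hmem x hx).1.le))
      (fun x hx => Real.contDiffAt_sqrt (hpos x (hmem x hx)).ne')
    have hderiv : ∫ x in τ'..s, deriv (√·) (y x) * (-2 * (a x * √(y x))) =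
        ∫ x in τ'..s, -a x := by
      refine intervalIntegral.integral_congr fun x hx => ?_
      have hyx := hpos x (hmem x hx)
      rw [(Real.hasDerivAt_sqrt hyx.ne').deriv]
      field_simp [(Real.sqrt_pos.2 hyx).ne']
    rw [hderiv, intervalIntegral.integral_neg] at hchain
    dsimp only
    linarith
  have hcont : ContinuousOn (fun τ' => √(y τ') - ∫ σ in τ'..s, a σ) (Icc τ s) := by
    refine (Real.continuous_sqrt.comp_continuousOn (hy.1.mono hIcc)).sub ?_
    rw [← uIcc_of_le hτs.le]
    exact intervalIntegral.continuousOn_primitive_interval_left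
      ((ha s hs).mono_set (by rw [uIcc_of_le hτs.le]; exact Icc_subset_Icc hτ le_rfl))
  have := hstep.of_subset_closure hcont continuousOn_const Ioc_subset_Icc_self
    (closure_Ioc hτs.ne).ge (left_mem_Icc.2 hτs.le)
  dsimp only at this
  linarith

end IsSol

noncomputable def sqrtSolRestartedAt (a : ℝ → ℝ) (y₀ τ t : ℝ) : ℝ :=
  max (max √y₀ (∫ u in (0:ℝ)..min t τ, a u) - ∫ u in (0:ℝ)..t, a u) 0

namespace sqrtSolRestartedAt

variable {a : ℝ → ℝ} {y₀ τ t : ℝ}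

theorem nonneg : 0 ≤ sqrtSolRestartedAt a y₀ τ t := le_max_right _ _

theorem eq_of_le (ht : t ≤ τ) :
    sqrtSolRestartedAt a y₀ τ t = max (√y₀ - ∫ u in (0:ℝ)..t, a u) 0 := by
  rw [sqrtSolRestartedAt, min_eq_left ht, ← max_sub_sub_right, sub_self, max_assoc, max_self]

theorem eq_of_ge (ha : LocIntOn a) (hτ : 0 ≤ τ) (ht : τ ≤ t) :
    sqrtSolRestartedAt a y₀ τ t =
      max (sqrtSolRestartedAt a y₀ τ τ - ∫ u in τ..t, a u) 0 := by
  have hM : 0 ≤ max √y₀ (∫ u in (0:ℝ)..τ, a u) - ∫ u in (0:ℝ)..τ, a u :=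
    sub_nonneg.2 (le_max_right _ _)
  rw [sqrtSolRestartedAt, sqrtSolRestartedAt, min_eq_right ht, min_self, max_eq_left hM,
    ← intervalIntegral.integral_interval_sub_left (ha.intervalIntegrable le_rfl (hτ.trans ht))
      (ha.intervalIntegrable le_rfl hτ)]
  ring_nf

theorem le_of_ge (ht : τ ≤ t) :
    max √y₀ (∫ u in (0:ℝ)..τ, a u) - ∫ u in (0:ℝ)..t, a u ≤ sqrtSolRestartedAt a y₀ τ t := by
  rw [sqrtSolRestartedAt, min_eq_right ht]
  exact le_max_left _ _

theorem continuousOn (ha : LocIntOn a) (hτ : 0 ≤ τ) :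
    ContinuousOn (sqrtSolRestartedAt a y₀ τ) (Ici 0) := by
  have hA := ha.continuousOn_primitive
  have hAτ : ContinuousOn (fun t => ∫ u in (0:ℝ)..min t τ, a u) (Ici 0) :=
    hA.comp (continuous_id.min continuous_const).continuousOn
      fun t ht => mem_Ici.2 (le_min (mem_Ici.1 ht) hτ)
  exact ((continuousOn_const.sup hAτ).sub hA).sup continuousOn_const

theorem isSol_sq (ha : LocIntOn a) (hy₀ : 0 ≤ y₀) (hτ : 0 ≤ τ) :
    IsSol a y₀ fun t => sqrtSolRestartedAt a y₀ τ t ^ 2 := by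
  have hw_int : LocIntOn fun u => a u * sqrtSolRestartedAt a y₀ τ u :=
    ha.mul_continuousOn (continuousOn ha hτ)
  have hw₀ : sqrtSolRestartedAt a y₀ τ 0 ^ 2 = y₀ := by
    rw [eq_of_le hτ, intervalIntegral.integral_same, sub_zero, max_eq_left (Real.sqrt_nonneg _),
      Real.sq_sqrt hy₀]
  have h_before : ∀ t, 0 ≤ t → t ≤ τ → sqrtSolRestartedAt a y₀ τ t ^ 2 =
      y₀ - 2 * ∫ u in (0:ℝ)..t, a u * sqrtSolRestartedAt a y₀ τ u :=
    fun t ht htτ => (sq_eq_sub_integral_of_eq_max_sub_integral (ha.intervalIntegrable le_rfl ht)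
      fun r hr => eq_of_le ((uIcc_of_le ht ▸ hr).2.trans htτ)).trans (by rw [hw₀])
  refine ⟨(continuousOn ha hτ).pow 2, fun t _ => sq_nonneg _, fun t ht => ?_⟩
  simp only [Real.sqrt_sq nonneg]
  rcases le_total t τ with htτ | hτt
  · exact h_before t ht htτ
  · rw [sq_eq_sub_integral_of_eq_max_sub_integral (ha.intervalIntegrable hτ ht)
      fun r hr => eq_of_ge ha hτ (uIcc_of_le hτt ▸ hr).1, h_before τ hτ le_rfl,
      ← intervalIntegral.integral_add_adjacent_intervals (hw_int.intervalIntegrable le_rfl hτ)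
        (hw_int.intervalIntegrable hτ ht)]
    ring

end sqrtSolRestartedAt

theorem IsSol.sqrt_sub_sqrt_le_integral_abs_sub {a₁ a₂ y₁ y₂ : ℝ → ℝ} {y₀ s t : ℝ}
    (ha₁ : LocIntOn a₁) (ha₂ : LocIntOn a₂) (hy₀ : 0 ≤ y₀) (hy₁ : IsSol a₁ y₀ y₁)
    (hy₂ : IsMaxSol a₂ y₀ y₂) (hs : s ∈ Icc 0 t) :
    √(y₁ s) - √(y₂ s) ≤ ∫ u in (0:ℝ)..t, |a₁ u - a₂ u| := by
  obtain ⟨τ, ⟨hτ, hτs⟩, hτ_zero, hy₁_ne⟩ :=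
    (hy₁.1.mono Icc_subset_Ici_self).exists_forall_Ioc_ne (c := 0) hs.1
  have hy₁s := hy₁.sqrt_eq_sub_integral ha₁ hτ hτs fun σ hσ =>
    (hy₁.2.1 σ (hτ.trans hσ.1.le)).lt_of_ne' (hy₁_ne σ hσ)
  set M := max √y₀ (∫ u in (0:ℝ)..τ, a₂ u)
  have hy₁τ : √(y₁ τ) ≤ M - ∫ u in (0:ℝ)..τ, a₂ u := by
    rcases hτ_zero with rfl | hτ_zero
    · simp [M, hy₁.2.2 0 le_rfl]
    · rw [hτ_zero, Real.sqrt_zero, sub_nonneg]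
      exact le_max_right _ _
  have hy₂s : M - ∫ u in (0:ℝ)..s, a₂ u ≤ √(y₂ s) :=
    calc M - ∫ u in (0:ℝ)..s, a₂ u ≤ sqrtSolRestartedAt a₂ y₀ τ s :=
          sqrtSolRestartedAt.le_of_ge hτs
      _ = √(sqrtSolRestartedAt a₂ y₀ τ s ^ 2) := (Real.sqrt_sq sqrtSolRestartedAt.nonneg).symm
      _ ≤ √(y₂ s) := Real.sqrt_le_sqrt (hy₂.2 _ (sqrtSolRestartedAt.isSol_sq ha₂ hy₀ hτ) s hs.1)
  have hA₂ := intervalIntegral.integral_interval_sub_left (ha₂.intervalIntegrable le_rfl hs.1)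
    (ha₂.intervalIntegrable le_rfl hτ)
  have hd : LocIntOn fun u => |a₁ u - a₂ u| := fun r hr => ((ha₁ r hr).sub (ha₂ r hr)).abs
  calc √(y₁ s) - √(y₂ s) ≤ ∫ u in τ..s, (a₂ u - a₁ u) := by
        rw [intervalIntegral.integral_sub (ha₂.intervalIntegrable hτ hs.1)
          (ha₁.intervalIntegrable hτ hs.1)]
        linarith
    _ ≤ ∫ u in τ..s, |a₁ u - a₂ u| :=
        intervalIntegral.integral_mono_on hτs
          ((ha₂.intervalIntegrable hτ hs.1).sub (ha₁.intervalIntegrable hτ hs.1))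
          (hd.intervalIntegrable hτ hs.1) fun u _ => abs_sub_comm (a₁ u) _ ▸ le_abs_self _
    _ ≤ ∫ u in (0:ℝ)..t, |a₁ u - a₂ u| :=
        intervalIntegral.integral_mono_interval hτ hτs hs.2
          (Eventually.of_forall fun _ => abs_nonneg _)
          (hd.intervalIntegrable le_rfl (hs.1.trans hs.2))

theorem stmt5 (a₁ a₂ : ℝ → ℝ) (y₀ : ℝ) (ha₁ : LocIntOn a₁) (ha₂ : LocIntOn a₂) (hy₀ : 0 ≤ y₀)
    (y₁ y₂ : ℝ → ℝ) (hy₁ : IsMaxSol a₁ y₀ y₁) (hy₂ : IsMaxSol a₂ y₀ y₂) :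
    ∀ t : ℝ, 0 ≤ t → ∀ s ∈ Set.Icc (0:ℝ) t,
      |Real.sqrt (y₁ s) - Real.sqrt (y₂ s)| ≤ ∫ τ in (0:ℝ)..t, |a₁ τ - a₂ τ| := by
  intro t _ s hs
  have h₂₁ := hy₂.1.sqrt_sub_sqrt_le_integral_abs_sub ha₂ ha₁ hy₀ hy₁ hs
  simp only [abs_sub_comm (a₂ _)] at h₂₁
  exact abs_sub_le_iff.2 ⟨hy₁.1.sqrt_sub_sqrt_le_integral_abs_sub ha₁ ha₂ hy₀ hy₂ hs, h₂₁⟩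
end

section
/- Let a: [0,∞) → ℝ be locally integrable, let y₀ ≥ 0, and assume that the negative part a⁻ := max(−a, 0) satisfies ∫₀^∞ a⁻(s) ds < +∞. Let y be the maximal solution of the Cauchy problem y' + 2a√y = 0, y(0) = y₀, and set a*(s) := a(s) if y(s) > 0 and a*(s) := 0 otherwise. Then ∫₀^∞ |a*(s)| ds ≤ √y₀ + 2∫₀^∞ a⁻(s) ds; in particular the function t ↦ √(y(t)) has finite total variation on [0,∞). -/
/-!
For `ε > 0` the function `√(y + ε)` is absolutely continuous (`√` is Lipschitz on `[ε, ∞)`)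
with derivative `-a √y / √(y + ε)` almost everywhere, so the fundamental theorem of calculus
for absolutely continuous functions applies to it. As `ε → 0⁺` these integrands converge to
`-a*` under the domination `|a|`, which gives `√y(v) - √y(u) = -∫ᵤᵛ a*`. Integrating
`|a*| ≤ a* + 2 a⁻` over `[0, T]` bounds `∫₀ᵀ |a*|` by `√y₀ + 2 ∫₀^∞ a⁻`, and
`|√y(v) - √y(u)| ≤ ∫ᵤᵛ |a*|` bounds the variation of `√y` by the same quantity.
In the code `a*` is `{s | 0 < y s}.indicator a`.
-/

open MeasureTheory Set Filter

open scoped Topology ENNReal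

theorem AbsolutelyContinuousOnInterval.of_dist_le_mul {X Y : Type*} [PseudoMetricSpace X]
    [PseudoMetricSpace Y] {f : ℝ → X} {g : ℝ → Y} {u v K : ℝ}
    (hf : AbsolutelyContinuousOnInterval f u v)
    (h : ∀ x ∈ uIcc u v, ∀ x' ∈ uIcc u v, dist (g x) (g x') ≤ K * dist (f x) (f x')) :
    AbsolutelyContinuousOnInterval g u v := by
  unfold AbsolutelyContinuousOnInterval at hf ⊢
  refine squeeze_zero' (Eventually.of_forall fun _ => Finset.sum_nonneg fun _ _ => dist_nonneg)
    ?_ (by simpa using hf.const_mul K)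
  refine eventually_inf_principal.2 (Eventually.of_forall fun E hE => ?_)
  rw [Finset.mul_sum]
  exact Finset.sum_le_sum fun i hi => h _ (hE.1 i hi).1 _ (hE.1 i hi).2

theorem eVariationOn_le_measure_univ {α E : Type*} [LinearOrder α] [TopologicalSpace α]
    [OrderClosedTopology α] [MeasurableSpace α] [OpensMeasurableSpace α]
    [PseudoEMetricSpace E] (μ : Measure α) {f : α → E} {s : Set α}
    (h : ∀ x ∈ s, ∀ x' ∈ s, x ≤ x' → edist (f x) (f x') ≤ μ (Ioc x x')) :
    eVariationOn f s ≤ μ univ := by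
  refine iSup_le fun ⟨n, u, hu, hus⟩ => ?_
  calc ∑ i ∈ Finset.range n, edist (f (u (i + 1))) (f (u i))
      ≤ ∑ i ∈ Finset.range n, μ (Ioc (u i) (u (i + 1))) :=
        Finset.sum_le_sum fun i _ => by
          rw [edist_comm]; exact h _ (hus i) _ (hus _) (hu i.le_succ)
    _ ≤ μ univ := sum_measure_le_measure_univ (fun _ _ => measurableSet_Ioc.nullMeasurableSet)
        fun _ _ _ _ hij => (hu.pairwise_disjoint_on_Ioc_succ hij).aedisjoint

theorem Real.abs_sqrt_sub_sqrt_le {ε x x' : ℝ} (hε : 0 < ε) (hx : ε ≤ x) (hx' : ε ≤ x') :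
    |√x - √x'| ≤ (√ε)⁻¹ * |x - x'| := by
  have hε' : 0 < √ε := Real.sqrt_pos.2 hε
  have hsum : √ε ≤ √x + √x' := by
    linarith [Real.sqrt_le_sqrt hx, Real.sqrt_nonneg x']
  have hprod : |x - x'| = |√x - √x'| * (√x + √x') := by
    have h := Real.mul_self_sqrt (hε.le.trans hx)
    have h' := Real.mul_self_sqrt (hε.le.trans hx')
    rw [← abs_of_nonneg (by positivity : 0 ≤ √x + √x'), ← abs_mul]
    congr 1
    linear_combination h' - h
  rw [hprod, inv_mul_eq_div, le_div_iff₀ hε']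
  exact mul_le_mul_of_nonneg_left hsum (abs_nonneg _)

theorem tendsto_mul_sqrt_div_sqrt_add (c : ℝ) {r : ℝ} (hr : 0 ≤ r) :
    Tendsto (fun ε => c * (√r / √(r + ε))) (𝓝[>] 0) (𝓝 (if 0 < r then c else 0)) := by
  rcases hr.eq_or_lt with rfl | hr
  · simp
  have hc : ContinuousAt (fun ε => c * (√r / √(r + ε))) 0 :=
    continuousAt_const.mul (continuousAt_const.div (by fun_prop)
      (by simpa using (Real.sqrt_pos.2 hr).ne'))
  simpa [hr, (Real.sqrt_pos.2 hr).ne'] using hc.tendsto.mono_left nhdsWithin_le_nhds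

section

variable {a y : ℝ → ℝ} {y₀ u v : ℝ}

theorem LocIntOn.intervalIntegrable_mul (ha : LocIntOn a) {φ : ℝ → ℝ}
    (hφ : ContinuousOn φ (Ici 0)) (hu : 0 ≤ u) (hv : 0 ≤ v) :
    IntervalIntegrable (fun s => a s * φ s) volume u v := by
  have hsub : uIcc u v ⊆ Icc 0 (max u v) := Icc_subset_Icc (le_min hu hv) le_rfl
  exact (IntegrableOn.mul_continuousOn ((ha _ (le_max_of_le_left hu)).mono_set hsub)
    (hφ.mono fun s hs => (hsub hs).1) isCompact_uIcc).intervalIntegrable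

theorem LocIntOn.intervalIntegrable_s12 (ha : LocIntOn a) (hu : 0 ≤ u) (hv : 0 ≤ v) :
    IntervalIntegrable a volume u v := by
  simpa using ha.intervalIntegrable_mul continuousOn_const hu hv (φ := fun _ => 1)

namespace IsSol

theorem continuousOn_sqrt (hy : IsSol a y₀ y) : ContinuousOn (fun t => √(y t)) (Ici 0) :=
  Real.continuous_sqrt.comp_continuousOn hy.1

theorem eq_sub_integral (ha : LocIntOn a) (hy : IsSol a y₀ y) (hu : 0 ≤ u) (hv : 0 ≤ v) :
    y v = y u - 2 * ∫ s in u..v, a s * √(y s) := by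
  have hI := fun t (ht : 0 ≤ t) => ha.intervalIntegrable_mul hy.continuousOn_sqrt le_rfl ht
  rw [hy.2.2 v hv, hy.2.2 u hu, ← intervalIntegral.integral_interval_sub_left (hI v hv) (hI u hu)]
  ring

theorem absolutelyContinuousOnInterval (ha : LocIntOn a) (hy : IsSol a y₀ y) (hu : 0 ≤ u)
    (hv : 0 ≤ v) : AbsolutelyContinuousOnInterval y u v := by
  have hI := ha.intervalIntegrable_mul hy.continuousOn_sqrt hu hv
  refine (hI.absolutelyContinuousOnInterval_intervalIntegral left_mem_uIcc).of_dist_le_mul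
    (K := 2) fun x hx x' hx' => le_of_eq ?_
  have h0 : ∀ t ∈ uIcc u v, 0 ≤ t := fun t ht => (le_min hu hv).trans ht.1
  rw [hy.eq_sub_integral ha hu (h0 x hx), hy.eq_sub_integral ha hu (h0 x' hx'), Real.dist_eq,
    Real.dist_eq, ← abs_two, ← abs_mul, ← abs_neg]
  ring_nf

theorem ae_hasDerivAt (ha : LocIntOn a) (hy : IsSol a y₀ y) (hu : 0 ≤ u) (hv : 0 ≤ v) :
    ∀ᵐ x, x ∈ uIcc u v → HasDerivAt y (-2 * (a x * √(y x))) x := by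
  have hI := ha.intervalIntegrable_mul hy.continuousOn_sqrt hu hv
  have hne : ∀ᵐ x : ℝ, x ≠ 0 := by simp [ae_iff, measure_singleton]
  filter_upwards [hI.ae_hasDerivAt_integral, hne] with x hx hx0 hxI
  have hxpos : 0 < x := lt_of_le_of_ne ((le_min hu hv).trans hxI.1) (Ne.symm hx0)
  refine (((hx hxI u left_mem_uIcc).const_mul (-2)).const_add (y u)).congr_of_eventuallyEq ?_
    |>.congr_deriv (by ring)
  filter_upwards [lt_mem_nhds hxpos] with t ht
  rw [hy.eq_sub_integral ha hu ht.le]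
  ring

theorem sqrt_add_sub_sqrt_add (ha : LocIntOn a) (hy : IsSol a y₀ y) {ε : ℝ} (hε : 0 < ε)
    (hu : 0 ≤ u) (hv : 0 ≤ v) :
    √(y v + ε) - √(y u + ε) = -∫ s in u..v, a s * (√(y s) / √(y s + ε)) := by
  have h0 : ∀ t ∈ uIcc u v, ε ≤ y t + ε := fun t ht =>
    le_add_of_nonneg_left (hy.2.1 t ((le_min hu hv).trans ht.1))
  have hAC : AbsolutelyContinuousOnInterval (fun t => √(y t + ε)) u v :=
    (hy.absolutelyContinuousOnInterval ha hu hv).of_dist_le_mul (K := (√ε)⁻¹)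
      fun x hx x' hx' => by
        simpa [Real.dist_eq] using Real.abs_sqrt_sub_sqrt_le hε (h0 x hx) (h0 x' hx')
  rw [← hAC.integral_deriv_eq_sub, ← intervalIntegral.integral_neg]
  refine intervalIntegral.integral_congr_ae ?_
  filter_upwards [hy.ae_hasDerivAt ha hu hv] with x hx hxI
  have hpos : 0 < y x + ε := hε.trans_le (h0 x (uIoc_subset_uIcc hxI))
  rw [((hx (uIoc_subset_uIcc hxI)).add_const ε).sqrt hpos.ne' |>.deriv]
  field_simp

theorem intervalIntegrable_indicator (ha : LocIntOn a) (hy : IsSol a y₀ y) (hu : 0 ≤ u)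
    (hv : 0 ≤ v) : IntervalIntegrable ({s | 0 < y s}.indicator a) volume u v := by
  have hsub : uIoc u v ⊆ Ici 0 := fun t ht => (le_min hu hv).trans (uIoc_subset_uIcc ht).1
  rw [intervalIntegrable_iff]
  exact Integrable.indicator₀ (ha.intervalIntegrable_s12 hu hv).def' <|
    nullMeasurableSet_lt aemeasurable_const ((hy.1.mono hsub).aemeasurable measurableSet_uIoc)

theorem sqrt_sub_sqrt (ha : LocIntOn a) (hy : IsSol a y₀ y) (hu : 0 ≤ u) (hv : 0 ≤ v) :
    √(y v) - √(y u) = -∫ s in u..v, {s | 0 < y s}.indicator a s := by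
  have h0 : ∀ x ∈ uIoc u v, 0 ≤ x := fun x hx => (le_min hu hv).trans (uIoc_subset_uIcc hx).1
  have hlim : Tendsto (fun ε => ∫ s in u..v, a s * (√(y s) / √(y s + ε))) (𝓝[>] 0)
      (𝓝 (∫ s in u..v, {s | 0 < y s}.indicator a s)) := by
    refine intervalIntegral.tendsto_integral_filter_of_dominated_convergence (fun s => |a s|)
      ?_ ?_ (ha.intervalIntegrable_s12 hu hv).abs ?_
    · filter_upwards [self_mem_nhdsWithin] with ε (hε : 0 < ε)
      have hφ : ContinuousOn (fun s => √(y s) / √(y s + ε)) (Ici 0) :=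
        hy.continuousOn_sqrt.div (Real.continuous_sqrt.comp_continuousOn
          (hy.1.add continuousOn_const)) fun s hs => (Real.sqrt_pos.2 (by
            linarith [hy.2.1 s hs])).ne'
      exact (ha.intervalIntegrable_mul hφ hu hv).def'.aestronglyMeasurable
    · filter_upwards [self_mem_nhdsWithin] with ε (hε : 0 < ε)
      refine ae_of_all _ fun s _ => ?_
      rw [Real.norm_eq_abs, abs_mul,
        abs_of_nonneg (div_nonneg (Real.sqrt_nonneg (y s)) (Real.sqrt_nonneg _))]
      exact mul_le_of_le_one_right (abs_nonneg _)
        (div_le_one_of_le₀ (Real.sqrt_le_sqrt (by linarith)) (Real.sqrt_nonneg _))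
    · refine ae_of_all _ fun s hs => ?_
      simpa [indicator_apply] using tendsto_mul_sqrt_div_sqrt_add (a s) (hy.2.1 s (h0 s hs))
  have hsqrt : ∀ t, Tendsto (fun ε => √(y t + ε)) (𝓝[>] 0) (𝓝 (√(y t))) := fun t => by
    simpa using ((continuous_const.add continuous_id).sqrt.tendsto 0).mono_left
      nhdsWithin_le_nhds (f := fun ε : ℝ => √(y t + ε))
  refine tendsto_nhds_unique ((hsqrt v).sub (hsqrt u)) (hlim.neg.congr' ?_)
  filter_upwards [self_mem_nhdsWithin] with ε hε
  exact (hy.sqrt_add_sub_sqrt_add ha hε hu hv).symm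

theorem apply_zero (hy : IsSol a y₀ y) : y 0 = y₀ := by
  simpa using hy.2.2 0 le_rfl

theorem integral_abs_indicator_le (ha : LocIntOn a) (hy : IsSol a y₀ y)
    (haneg : IntegrableOn (fun s => max (-a s) 0) (Ici 0)) {T : ℝ} (hT : 0 ≤ T) :
    ∫ s in (0:ℝ)..T, |{s | 0 < y s}.indicator a s| ≤
      √y₀ + 2 * ∫ s in Ici (0:ℝ), max (-a s) 0 := by
  have hI := hy.intervalIntegrable_indicator ha le_rfl hT
  have hneg : IntervalIntegrable (fun s => max (-a s) 0) volume 0 T :=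
    (intervalIntegrable_iff_integrableOn_Ioc_of_le hT).2 (haneg.mono_set
      (Ioc_subset_Ioi_self.trans Ioi_subset_Ici_self))
  have hpt : ∀ s, |{s | 0 < y s}.indicator a s| ≤
      {s | 0 < y s}.indicator a s + 2 * max (-a s) 0 := fun s => by
    by_cases h : 0 < y s
    · rw [indicator_of_mem (show s ∈ {s | 0 < y s} from h)]
      exact abs_le.2 ⟨by linarith [le_max_left (-a s) 0], by linarith [le_max_right (-a s) 0]⟩
    · simp [h]
  calc ∫ s in (0:ℝ)..T, |{s | 0 < y s}.indicator a s|
      ≤ ∫ s in (0:ℝ)..T, ({s | 0 < y s}.indicator a s + 2 * max (-a s) 0) :=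
        intervalIntegral.integral_mono_on hT hI.abs (hI.add (hneg.const_mul 2)) fun s _ => hpt s
    _ = (√y₀ - √(y T)) + 2 * ∫ s in (0:ℝ)..T, max (-a s) 0 := by
        rw [intervalIntegral.integral_add hI (hneg.const_mul 2), intervalIntegral.integral_const_mul,
          ← neg_sub, ← hy.apply_zero, hy.sqrt_sub_sqrt ha le_rfl hT, neg_neg]
    _ ≤ √y₀ + 2 * ∫ s in Ici (0:ℝ), max (-a s) 0 := by
        have hmono : ∫ s in (0:ℝ)..T, max (-a s) 0 ≤ ∫ s in Ici (0:ℝ), max (-a s) 0 := by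
          rw [intervalIntegral.integral_of_le hT]
          exact setIntegral_mono_set haneg (ae_of_all _ fun _ => le_max_right _ _)
            (Ioc_subset_Ioi_self.trans Ioi_subset_Ici_self).eventuallyLE
        linarith [Real.sqrt_nonneg (y T)]

theorem lintegral_abs_indicator_le (ha : LocIntOn a) (hy : IsSol a y₀ y)
    (haneg : IntegrableOn (fun s => max (-a s) 0) (Ici 0)) :
    ∫⁻ s in Ici (0:ℝ), ENNReal.ofReal |{s | 0 < y s}.indicator a s| ≤
      ENNReal.ofReal (√y₀ + 2 * ∫ s in Ici (0:ℝ), max (-a s) 0) := by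
  have hU : Ici (0:ℝ) = ⋃ n : ℕ, Icc 0 (n : ℝ) := by
    ext x
    simp only [mem_Ici, mem_iUnion, mem_Icc]
    exact ⟨fun hx => (exists_nat_ge x).imp fun _ hn => ⟨hx, hn⟩, fun ⟨_, hx, _⟩ => hx⟩
  conv_lhs => rw [hU]
  rw [setLIntegral_iUnion_of_directed _
    (Monotone.directed_le fun m n h => Icc_subset_Icc_right (Nat.cast_le.2 h))]
  refine iSup_le fun n => ?_
  have hI := (intervalIntegrable_iff_integrableOn_Icc_of_le n.cast_nonneg).1
    (hy.intervalIntegrable_indicator ha le_rfl n.cast_nonneg)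
  rw [← ofReal_integral_eq_lintegral_ofReal hI.abs (ae_of_all _ fun _ => abs_nonneg _),
    integral_Icc_eq_integral_Ioc, ← intervalIntegral.integral_of_le n.cast_nonneg]
  exact ENNReal.ofReal_le_ofReal (hy.integral_abs_indicator_le ha haneg n.cast_nonneg)

theorem edist_sqrt_le (ha : LocIntOn a) (hy : IsSol a y₀ y) (hu : 0 ≤ u) (huv : u ≤ v) :
    edist (√(y u)) (√(y v)) ≤ ∫⁻ s in Ioc u v, ENNReal.ofReal |{s | 0 < y s}.indicator a s| := by
  have hI := (intervalIntegrable_iff_integrableOn_Ioc_of_le huv).1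
    (hy.intervalIntegrable_indicator ha hu (hu.trans huv))
  rw [edist_dist, Real.dist_eq, abs_sub_comm, hy.sqrt_sub_sqrt ha hu (hu.trans huv), abs_neg,
    intervalIntegral.integral_of_le huv,
    ← ofReal_integral_eq_lintegral_ofReal hI.abs (ae_of_all _ fun _ => abs_nonneg _)]
  exact ENNReal.ofReal_le_ofReal abs_integral_le_integral_abs

theorem boundedVariationOn_sqrt (ha : LocIntOn a) (hy : IsSol a y₀ y)
    (hfin : ∫⁻ s in Ici (0:ℝ), ENNReal.ofReal |{s | 0 < y s}.indicator a s| ≠ ∞) :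
    BoundedVariationOn (fun t => √(y t)) (Ici 0) := by
  set ν := (volume.restrict (Ici (0:ℝ))).withDensity
    fun s => ENNReal.ofReal |{s | 0 < y s}.indicator a s|
  refine ne_top_of_le_ne_top hfin
    ((eVariationOn_le_measure_univ ν fun u hu v _ huv => ?_).trans_eq ?_)
  · rw [withDensity_apply _ measurableSet_Ioc, Measure.restrict_restrict measurableSet_Ioc,
      inter_eq_left.2 (Ioc_subset_Ioi_self.trans (Ioi_subset_Ici hu))]
    exact hy.edist_sqrt_le ha hu huv
  · rw [withDensity_apply _ MeasurableSet.univ, Measure.restrict_univ]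

end IsSol

end

theorem stmt12_general (a : ℝ → ℝ) (y₀ : ℝ) (ha : LocIntOn a)
    (haneg : MeasureTheory.IntegrableOn (fun s => max (-a s) 0) (Set.Ici 0)
      MeasureTheory.volume)
    (y : ℝ → ℝ) (hy : IsMaxSol a y₀ y)
    (astar : ℝ → ℝ) (hastar : ∀ s : ℝ, astar s = if 0 < y s then a s else 0) :
    (∫⁻ s in Set.Ici (0:ℝ), ENNReal.ofReal |astar s| ≤
      ENNReal.ofReal (Real.sqrt y₀ + 2 * ∫ s in Set.Ici (0:ℝ), max (-a s) 0)) ∧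
    BoundedVariationOn (fun t => Real.sqrt (y t)) (Set.Ici 0) := by
  obtain rfl : astar = {s | 0 < y s}.indicator a := funext fun s => by
    simp [hastar, indicator_apply]
  have hbound := hy.1.lintegral_abs_indicator_le ha haneg
  exact ⟨hbound, hy.1.boundedVariationOn_sqrt ha (hbound.trans_lt ENNReal.ofReal_lt_top).ne⟩

theorem stmt12 (a : ℝ → ℝ) (y₀ : ℝ) (ha : LocIntOn a) (hy₀ : 0 ≤ y₀)
    (haneg : MeasureTheory.IntegrableOn (fun s => max (-a s) 0) (Set.Ici 0)
      MeasureTheory.volume)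
    (y : ℝ → ℝ) (hy : IsMaxSol a y₀ y)
    (astar : ℝ → ℝ) (hastar : ∀ s : ℝ, astar s = if 0 < y s then a s else 0) :
    (∫⁻ s in Set.Ici (0:ℝ), ENNReal.ofReal |astar s| ≤
      ENNReal.ofReal (Real.sqrt y₀ + 2 * ∫ s in Set.Ici (0:ℝ), max (-a s) 0)) ∧
    BoundedVariationOn (fun t => Real.sqrt (y t)) (Set.Ici 0) :=
  stmt12_general a y₀ ha haneg y hy astar hastar
end
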